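/- arXiv:2103.02179 — 5 statements merged into one kernel-verified Lean document; each statement's English description precedes it below -/
import Mathlib

section
/- Let p be a prime and α, α' irrational numbers with p²α' = α + k for some integer k ∈ {0,…,p²−1}. Let c, d be coprime integers with c ≠ 0, and set C = cp², D = d − ck. Suppose a, b ∈ ℤ satisfy ad − bc = 1 and A, B ∈ ℤ satisfy AD − BC = 1. Then p²·(Aα' + B)/(Cα' + D) − (aα + b)/(cα + d) = (A − a)/c, which is an integer. In particular, setting β = (aα + b)/(cα + d) and β' = (Aα' + B)/(Cα' + D), one has p²β' ≡ β (mod ℤ). -/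
/-- With `p²α' = α + k`, `C = cp²`, `D = d - ck`, `ad - bc = 1`, `AD - BC = 1`, one has
`p²(Aα'+B)/(Cα'+D) - (aα+b)/(cα+d) = (A-a)/c ∈ ℤ`, so `p²β' ≡ β (mod ℤ)`. -/
theorem beta_compatibility (p : ℕ) (hp : p.Prime) (α α' : ℝ)
    (hα : Irrational α) (hα' : Irrational α')
    (k : ℤ) (hk₀ : 0 ≤ k) (hk₁ : k < (p : ℤ) ^ 2)
    (hrel : (p : ℝ) ^ 2 * α' = α + k)
    (c d : ℤ) (hc : c ≠ 0) (hcd : Int.gcd c d = 1)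
    (C D : ℤ) (hC : C = c * (p : ℤ) ^ 2) (hD : D = d - c * k)
    (a b A B : ℤ) (h₁ : a * d - b * c = 1) (h₂ : A * D - B * C = 1) :
    ∃ m : ℤ, A - a = m * c ∧
      (p : ℝ) ^ 2 * (((A : ℝ) * α' + B) / ((C : ℝ) * α' + D))
        - ((a : ℝ) * α + b) / ((c : ℝ) * α + d) = m := by
  subst hC hD
  have key : (A - a) * d = c * (A * k + B * p ^ 2 - b) := by linear_combination h₂ - h₁
  have hcop : IsCoprime c d := Int.isCoprime_iff_gcd_eq_one.mpr hcd
  have hdvd : c ∣ (A - a) := hcop.dvd_of_dvd_mul_right ⟨_, key⟩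
  obtain ⟨m, hm⟩ := hdvd
  refine ⟨m, by rw [hm]; ring, ?_⟩
  have hmd : A * k + B * p ^ 2 - b = m * d := by
    have := key
    rw [hm] at this
    have hc' : (c : ℤ) ≠ 0 := hc
    exact mul_left_cancel₀ hc' (by linarith [this])
  have hden : (c : ℝ) * α + d ≠ 0 := by
    intro h0
    apply hα
    refine ⟨(-d / c : ℚ), ?_⟩
    have hcr : (c : ℝ) ≠ 0 := Int.cast_ne_zero.mpr hc
    push_cast
    field_simp
    linarith
  have heq : ((c * (p : ℤ) ^ 2 : ℤ) : ℝ) * α' + ((d - c * k : ℤ) : ℝ) = (c : ℝ) * α + d := by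
    push_cast
    linear_combination (c : ℝ) * hrel
  rw [heq]
  field_simp
  have hmdR : (A : ℝ) * k + B * p ^ 2 - b = m * d := by exact_mod_cast hmd
  push_cast [hm]
  have hmR : (A : ℝ) - a = (c : ℝ) * m := by exact_mod_cast hm
  linear_combination (A : ℝ) * hrel + hmdR + α * hmR
end

section
/- Let p be a prime, θ ∈ ℝ nonzero, x ∈ ℤ_p invertible with digits (x_j) and x^{-1} with digits (y_j). For s_1 = j_1/p^{k_1}, s_4 = j_4/p^{k_4} ∈ ℤ[1/p], one has exp(2πi (Σ_{j=0}^{k_1+k_4−1} y_j p^j) s_1 s_4) = exp(2πi {x^{-1} s_1 s_4}_p), where {·}_p denotes the p-adic fractional part. -/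
/-- `q` is the p-adic fractional part of `a`: it is a rational in `ℤ[1/p] ∩ [0,1)`
with `a - q` a p-adic integer. -/
def IsPadicFracPart (p : ℕ) [Fact p.Prime] (a : ℚ_[p]) (q : ℚ) : Prop :=
  0 ≤ q ∧ q < 1 ∧ (∃ j : ℤ, ∃ k : ℕ, q = (j : ℚ) / (p : ℚ) ^ k) ∧
    ‖a - (q : ℚ_[p])‖ ≤ 1

/-!
The partial sum `N = ∑_{j < k₁ + k₄} y_j p^j` is congruent to `y` modulo `p^(k₁ + k₄)`, so
`(y - N) s₁ s₄` is a p-adic integer. Hence `N s₁ s₄ - q` is an element of `ℤ[1/p]` of p-adic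
norm at most `1`, i.e. an integer, and `exp (2πi ·)` does not see it.
-/

open Finset

namespace PadicInt
variable {p : ℕ} [Fact p.Prime]

theorem summable_mul_pow (d : ℕ → ℤ_[p]) : Summable fun j => d j * (p : ℤ_[p]) ^ j := by
  refine NonarchimedeanAddGroup.summable_of_tendsto_cofinite_zero ?_
  rw [Nat.cofinite_eq_atTop]
  refine squeeze_zero_norm (fun j => ?_) (tendsto_pow_atTop_nhds_zero_of_lt_one (norm_nonneg _)
    (norm_natCast_lt_one_iff (p := p) |>.mpr dvd_rfl))
  rw [norm_mul, norm_pow]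
  exact mul_le_of_le_one_left (by positivity) (norm_le_one _)

theorem pow_dvd_tsum_mul_pow_sub_sum_range (d : ℕ → ℤ_[p]) (K : ℕ) :
    (p : ℤ_[p]) ^ K ∣ ∑' j, d j * (p : ℤ_[p]) ^ j - ∑ j ∈ range K, d j * (p : ℤ_[p]) ^ j := by
  refine ⟨∑' j, d (j + K) * (p : ℤ_[p]) ^ j, ?_⟩
  rw [← (summable_mul_pow d).sum_add_tsum_nat_add K, add_sub_cancel_left,
    ← (summable_mul_pow _).tsum_mul_left]
  exact tsum_congr fun j => by ring

end PadicInt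

namespace Padic
variable {p : ℕ} [Fact p.Prime]

theorem exists_int_eq_of_norm_le_one {r : ℚ} {c : ℤ} {n : ℕ} (hr : r = c / (p : ℚ) ^ n)
    (h : ‖(r : ℚ_[p])‖ ≤ 1) : ∃ m : ℤ, r = m := by
  have hp : p ≠ 0 := (Fact.out : p.Prime).ne_zero
  have hc : ‖(c : ℚ_[p])‖ ≤ (p : ℝ) ^ (-(n : ℤ)) := by
    have : (c : ℚ_[p]) = (r : ℚ_[p]) * (p : ℚ_[p]) ^ n := by
      rw [hr]; push_cast; exact (div_mul_cancel₀ _ (pow_ne_zero _ (by simp [hp]))).symm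
    rw [this, norm_mul, norm_p_pow]
    exact mul_le_of_le_one_left (by positivity) h
  obtain ⟨m, rfl⟩ := (norm_int_le_pow_iff_dvd c n).mp hc
  exact ⟨m, by rw [hr]; push_cast; exact mul_div_cancel_left₀ _ (pow_ne_zero _ (by simp [hp]))⟩

theorem exists_int_mul_mul_eq_add_of_pow_dvd_sub {y : ℤ_[p]} {N j₁ j₄ j : ℤ} {k₁ k₄ k : ℕ}
    {s₁ s₄ q : ℚ} (hN : (p : ℤ_[p]) ^ (k₁ + k₄) ∣ y - N)
    (hs₁ : s₁ = j₁ / (p : ℚ) ^ k₁) (hs₄ : s₄ = j₄ / (p : ℚ) ^ k₄) (hq : q = j / (p : ℚ) ^ k)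
    (hyq : ‖(y : ℚ_[p]) * s₁ * s₄ - q‖ ≤ 1) :
    ∃ m : ℤ, N * s₁ * s₄ = q + m := by
  subst hs₁ hs₄ hq
  have hp : (p : ℚ) ≠ 0 := by simp [(Fact.out : p.Prime).ne_zero]
  have hp' : (p : ℚ_[p]) ≠ 0 := by simp [(Fact.out : p.Prime).ne_zero]
  obtain ⟨t, ht⟩ := hN
  have hy : (y : ℚ_[p]) = N + p ^ (k₁ + k₄) * t := by
    rw [← sub_eq_iff_eq_add', ← PadicInt.coe_intCast, ← PadicInt.coe_sub, ht]; push_cast; rfl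
  have hNq : ‖((N * (j₁ / p ^ k₁) * (j₄ / p ^ k₄) - j / p ^ k : ℚ) : ℚ_[p])‖ ≤ 1 := by
    have : ((N * (j₁ / p ^ k₁) * (j₄ / p ^ k₄) - j / p ^ k : ℚ) : ℚ_[p])
        = (y * (j₁ / p ^ k₁ : ℚ) * (j₄ / p ^ k₄ : ℚ) - (j / p ^ k : ℚ))
          + ((-t * j₁ * j₄ : ℤ_[p]) : ℚ_[p]) := by
      rw [hy]; push_cast; field_simp; ring
    rw [this]
    exact (nonarchimedean _ _).trans (max_le hyq (PadicInt.norm_le_one _))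
  obtain ⟨m, hm⟩ := exists_int_eq_of_norm_le_one (c := N * j₁ * j₄ * p ^ k - j * p ^ (k₁ + k₄))
    (n := k₁ + k₄ + k) (by field_simp; push_cast; ring) hNq
  exact ⟨m, by rw [← hm]; ring⟩

end Padic

theorem exp_partial_sum_eq_exp_fracPart_general (p : ℕ) [Fact p.Prime]
    (y : ℤ_[p])
    (yd : ℕ → ℕ)
    (hey : y = ∑' j : ℕ, (yd j : ℤ_[p]) * (p : ℤ_[p]) ^ j)
    (j₁ j₄ : ℤ) (k₁ k₄ : ℕ) (s₁ s₄ : ℚ)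
    (hs₁ : s₁ = (j₁ : ℚ) / (p : ℚ) ^ k₁) (hs₄ : s₄ = (j₄ : ℚ) / (p : ℚ) ^ k₄)
    (q : ℚ)
    (hq : IsPadicFracPart p ((y : ℚ_[p]) * (s₁ : ℚ_[p]) * (s₄ : ℚ_[p])) q) :
    Complex.exp (2 * Real.pi * Complex.I *
        ((∑ j ∈ Finset.range (k₁ + k₄), (yd j : ℂ) * (p : ℂ) ^ j) * (s₁ : ℂ) * (s₄ : ℂ)))
      = Complex.exp (2 * Real.pi * Complex.I * (q : ℂ)) := by
  obtain ⟨-, -, ⟨j, k, hqk⟩, hyq⟩ := hq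
  set N : ℕ := ∑ i ∈ range (k₁ + k₄), yd i * p ^ i with hN
  have hyN : (p : ℤ_[p]) ^ (k₁ + k₄) ∣ y - ((N : ℤ) : ℤ_[p]) := by
    simpa [hey, hN] using
      PadicInt.pow_dvd_tsum_mul_pow_sub_sum_range (fun i => (yd i : ℤ_[p])) (k₁ + k₄)
  obtain ⟨m, hm⟩ := Padic.exists_int_mul_mul_eq_add_of_pow_dvd_sub hyN hs₁ hs₄ hqk hyq
  have hmC : (∑ i ∈ range (k₁ + k₄), (yd i : ℂ) * p ^ i) * s₁ * s₄ = q + m := by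
    rw [hN] at hm; exact_mod_cast hm
  rw [hmC, Complex.exp_eq_exp_iff_exists_int]
  exact ⟨m, by ring⟩

/-- For invertible `x ∈ ℤ_p` with digits `(x_j)`, inverse `y = x⁻¹` with digits `(y_j)`,
and `s₁ = j₁/p^{k₁}`, `s₄ = j₄/p^{k₄} ∈ ℤ[1/p]`:
`exp(2πi (Σ_{j<k₁+k₄} y_j p^j) s₁ s₄) = exp(2πi {x⁻¹ s₁ s₄}_p)`. -/
theorem exp_partial_sum_eq_exp_fracPart (p : ℕ) [Fact p.Prime] (θ : ℝ) (hθ : θ ≠ 0)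
    (x y : ℤ_[p]) (hx : IsUnit x) (hxy : x * y = 1)
    (xd yd : ℕ → ℕ) (hxd : ∀ j, xd j < p) (hyd : ∀ j, yd j < p)
    (hex : x = ∑' j : ℕ, (xd j : ℤ_[p]) * (p : ℤ_[p]) ^ j)
    (hey : y = ∑' j : ℕ, (yd j : ℤ_[p]) * (p : ℤ_[p]) ^ j)
    (j₁ j₄ : ℤ) (k₁ k₄ : ℕ) (s₁ s₄ : ℚ)
    (hs₁ : s₁ = (j₁ : ℚ) / (p : ℚ) ^ k₁) (hs₄ : s₄ = (j₄ : ℚ) / (p : ℚ) ^ k₄)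
    (q : ℚ)
    (hq : IsPadicFracPart p ((y : ℚ_[p]) * (s₁ : ℚ_[p]) * (s₄ : ℚ_[p])) q) :
    Complex.exp (2 * Real.pi * Complex.I *
        ((∑ j ∈ Finset.range (k₁ + k₄), (yd j : ℂ) * (p : ℂ) ^ j) * (s₁ : ℂ) * (s₄ : ℂ)))
      = Complex.exp (2 * Real.pi * Complex.I * (q : ℂ)) :=
  exp_partial_sum_eq_exp_fracPart_general p y yd hey j₁ j₄ k₁ k₄ s₁ s₄ hs₁ hs₄ q hq
end

section
/- Let p, q be primes. The groups ℤ[1/p] × ℤ[1/p] and ℤ[1/q] × ℤ[1/q] are isomorphic (as abelian groups) if and only if p = q. -/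
/-!
Multiplication by `p` is surjective on `ℤ[1/p]`, hence on `ℤ[1/p]²`, and an isomorphism carries
this over to `ℤ[1/q]²` and then to its factor `ℤ[1/q]`. Dividing `1` by `p` there puts `1/p` in
`ℤ[1/q]`, i.e. `q^k = j p` for some `j, k`, so the prime `p` divides a power of the prime `q`.
-/

/-- `ℤ[1/p]` as an additive subgroup of `ℚ`: the subgroup of rationals of the form
`j/p^k` with `j ∈ ℤ`, `k ∈ ℕ`. -/
def zInvPow (p : ℕ) : AddSubgroup ℚ :=
  AddSubgroup.closure {q : ℚ | ∃ j : ℤ, ∃ k : ℕ, q = (j : ℚ) / (p : ℚ) ^ k}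

open Function

section NsmulSurjective

variable {A B : Type*} [AddCommMonoid A] [AddCommMonoid B] {n : ℕ}

lemma Function.Surjective.nsmul_prod (hA : Surjective (n • · : A → A))
    (hB : Surjective (n • · : B → B)) : Surjective (n • · : A × B → A × B) :=
  hA.prodMap hB

lemma Function.Surjective.nsmul_fst (h : Surjective (n • · : A × B → A × B)) :
    Surjective (n • · : A → A) := fun a ↦ by
  obtain ⟨x, hx⟩ := h (a, 0)
  exact ⟨x.1, congrArg Prod.fst hx⟩

lemma Function.Surjective.nsmul_of_addEquiv (e : A ≃+ B) (h : Surjective (n • · : A → A)) :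
    Surjective (n • · : B → B) := fun b ↦ by
  obtain ⟨a, ha⟩ := h (e.symm b)
  exact ⟨e a, by simp only [← map_nsmul, ha, e.apply_symm_apply]⟩

end NsmulSurjective

lemma mem_zInvPow_iff {p : ℕ} (hp : p ≠ 0) {x : ℚ} :
    x ∈ zInvPow p ↔ ∃ j : ℤ, ∃ k : ℕ, x = (j : ℚ) / (p : ℚ) ^ k := by
  refine ⟨fun hx ↦ ?_, fun h ↦ AddSubgroup.subset_closure h⟩
  have hp' : (p : ℚ) ≠ 0 := by exact_mod_cast hp
  induction hx using AddSubgroup.closure_induction with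
  | mem y hy => exact hy
  | zero => exact ⟨0, 0, by simp⟩
  | add a b _ _ ha hb =>
    obtain ⟨j₁, k₁, rfl⟩ := ha
    obtain ⟨j₂, k₂, rfl⟩ := hb
    exact ⟨j₁ * p ^ k₂ + j₂ * p ^ k₁, k₁ + k₂, by push_cast; rw [pow_add]; field_simp⟩
  | neg a _ ha =>
    obtain ⟨j, k, rfl⟩ := ha
    exact ⟨-j, k, by push_cast; ring⟩

lemma one_mem_zInvPow (p : ℕ) : (1 : ℚ) ∈ zInvPow p :=
  AddSubgroup.subset_closure ⟨1, 0, by simp⟩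

lemma nsmul_surjective_zInvPow {p : ℕ} (hp : p ≠ 0) :
    Surjective (p • · : zInvPow p → zInvPow p) := by
  rintro ⟨x, hx⟩
  obtain ⟨j, k, rfl⟩ := (mem_zInvPow_iff hp).mp hx
  refine ⟨⟨j / (p : ℚ) ^ (k + 1), (mem_zInvPow_iff hp).mpr ⟨j, k + 1, rfl⟩⟩, ?_⟩
  have hp' : (p : ℚ) ≠ 0 := by exact_mod_cast hp
  ext
  simp only [AddSubgroup.coe_nsmul, nsmul_eq_mul, pow_succ]
  field_simp

lemma dvd_pow_of_inv_mem_zInvPow {p q : ℕ} (hp : p ≠ 0) (hq : q ≠ 0)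
    (h : (p : ℚ)⁻¹ ∈ zInvPow q) : ∃ k, p ∣ q ^ k := by
  obtain ⟨j, k, hjk⟩ := (mem_zInvPow_iff hq).mp h
  have hqk : ((q ^ k : ℕ) : ℤ) = p * j := by
    rw [eq_div_iff (pow_ne_zero _ (by exact_mod_cast hq)),
      inv_mul_eq_iff_eq_mul₀ (by exact_mod_cast hp)] at hjk
    exact_mod_cast hjk
  exact ⟨k, Int.natCast_dvd_natCast.mp ⟨j, hqk⟩⟩

lemma inv_mem_zInvPow_of_nsmul_surjective {p q : ℕ}
    (h : Surjective (p • · : zInvPow q → zInvPow q)) : (p : ℚ)⁻¹ ∈ zInvPow q := by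
  obtain ⟨z, hz⟩ := h ⟨1, one_mem_zInvPow q⟩
  have hpz : (p : ℚ) * z = 1 := by simpa using congrArg Subtype.val hz
  rw [inv_eq_of_mul_eq_one_right hpz]
  exact z.2

/-- For primes `p, q`, the groups `ℤ[1/p] × ℤ[1/p]` and `ℤ[1/q] × ℤ[1/q]` are
isomorphic as abelian groups iff `p = q`. -/
theorem zInvPow_prod_iso_iff (p q : ℕ) (hp : p.Prime) (hq : q.Prime) :
    Nonempty ((zInvPow p × zInvPow p) ≃+ (zInvPow q × zInvPow q)) ↔ p = q := by
  refine ⟨fun ⟨e⟩ ↦ ?_, fun h ↦ h ▸ ⟨AddEquiv.refl _⟩⟩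
  have hsurj : Surjective (p • · : zInvPow q → zInvPow q) :=
    ((nsmul_surjective_zInvPow hp.ne_zero).nsmul_prod
      (nsmul_surjective_zInvPow hp.ne_zero)).nsmul_of_addEquiv e |>.nsmul_fst
  obtain ⟨k, hk⟩ := dvd_pow_of_inv_mem_zInvPow hp.ne_zero hq.ne_zero
    (inv_mem_zInvPow_of_nsmul_surjective hsurj)
  exact (Nat.prime_dvd_prime_iff_eq hp hq).mp (hp.dvd_of_dvd_pow hk)
end

section
/- Let p be a prime. The map h : Ω_p → Ξ_p sending (α_n)_{n∈ℕ} to (α_n mod ℤ)_{n∈ℕ} is a surjective group homomorphism, where Ξ_p is the group, under pointwise addition modulo 1, of sequences (α_n) with α_0 ∈ [0,1) and for all n there exists x_n ∈ {0,…,p−1} with pα_{n+1} = α_n + x_n. -/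
lemma coe_int_zero_addcircle (x : ℤ) : ((x : ℝ) : AddCircle (1 : ℝ)) = 0 := by
  rw [AddCircle.coe_eq_zero_iff]
  exact ⟨x, by simp⟩

/-- The map `h : Ω_p → Ξ_p`, `(α_n) ↦ (α_n mod ℤ)`, is a surjective group homomorphism,
where `Ξ_p` is realized as the sequences `β` in `ℝ/ℤ` with `p·β_{n+1} = β_n`. -/
theorem Omega_to_Xi_surjective_hom (p : ℕ) (hp : p.Prime) :
    (∀ α : ℕ → ℝ, (∀ n, ∃ x : ℤ, (p : ℝ) * α (n + 1) = α n + x) →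
      ∀ n, (p : ℤ) • ((α (n + 1) : ℝ) : AddCircle (1 : ℝ)) = ((α n : ℝ) : AddCircle (1 : ℝ))) ∧
    (∀ α β : ℕ → ℝ, ∀ n,
      (((α + β) n : ℝ) : AddCircle (1 : ℝ))
        = ((α n : ℝ) : AddCircle (1 : ℝ)) + ((β n : ℝ) : AddCircle (1 : ℝ))) ∧
    (∀ ξ : ℕ → AddCircle (1 : ℝ), (∀ n, (p : ℤ) • ξ (n + 1) = ξ n) →
      ∃ α : ℕ → ℝ, (∀ n, ∃ x : ℤ, (p : ℝ) * α (n + 1) = α n + x) ∧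
        ∀ n, ((α n : ℝ) : AddCircle (1 : ℝ)) = ξ n) := by
  refine ⟨?_, ?_, ?_⟩
  · intro α hα n
    obtain ⟨x, hx⟩ := hα n
    have : (p : ℤ) • ((α (n + 1) : ℝ) : AddCircle (1 : ℝ))
        = (((p : ℝ) * α (n + 1) : ℝ) : AddCircle (1 : ℝ)) := by
      push_cast
      rw [← AddCircle.coe_zsmul]
      push_cast
      simp [zsmul_eq_mul]
    rw [this, hx]
    push_cast
    rw [AddCircle.coe_add, coe_int_zero_addcircle, add_zero]
  · intro α β n
    simp [AddCircle.coe_add]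
  · intro ξ hξ
    choose α hα using fun n => QuotientAddGroup.mk_surjective (ξ n)
    refine ⟨α, ?_, hα⟩
    intro n
    have h1 : (((p : ℝ) * α (n + 1) : ℝ) : AddCircle (1 : ℝ)) = ((α n : ℝ) : AddCircle (1 : ℝ)) := by
      have : (((p : ℝ) * α (n + 1) : ℝ) : AddCircle (1 : ℝ))
          = (p : ℤ) • ((α (n + 1) : ℝ) : AddCircle (1 : ℝ)) := by
        rw [← AddCircle.coe_zsmul]; push_cast; simp [zsmul_eq_mul]
      rw [this, hα, hα, hξ]
    have h2 : (((p : ℝ) * α (n + 1) - α n : ℝ) : AddCircle (1 : ℝ)) = 0 := by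
      rw [AddCircle.coe_sub, h1, sub_self]
    rw [AddCircle.coe_eq_zero_iff] at h2
    obtain ⟨x, hx⟩ := h2
    exact ⟨x, by simp at hx; linarith [hx]⟩
end

section
/- Let p be a prime and α, α̃ ∈ Ω_p. If α_n = α̃_n for infinitely many n, then α_n ≡ α̃_n (mod ℤ) for all n. -/
/-- If `α, α̃ ∈ Ω_p` agree at infinitely many indices, then `α_n ≡ α̃_n (mod ℤ)` for
all `n`. -/
theorem Omega_p_agree_infinitely_often (p : ℕ) (hp : p.Prime)
    (α α' : ℕ → ℝ)
    (h₁ : ∀ n, ∃ x : ℤ, (p : ℝ) * α (n + 1) = α n + x)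
    (h₂ : ∀ n, ∃ x : ℤ, (p : ℝ) * α' (n + 1) = α' n + x)
    (hinf : {n : ℕ | α n = α' n}.Infinite) :
    ∀ n, ∃ m : ℤ, α n - α' n = m := by
  intro n
  -- key: for all k, (α n - α' n) - p^k * (α (n+k) - α' (n+k)) is an integer
  have key : ∀ k : ℕ, ∃ z : ℤ,
      α n - α' n = (p : ℝ) ^ k * (α (n + k) - α' (n + k)) + z := by
    intro k
    induction k with
    | zero => exact ⟨0, by simp⟩
    | succ k ih =>
      obtain ⟨z, hz⟩ := ih
      obtain ⟨x, hx⟩ := h₁ (n + k)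
      obtain ⟨x', hx'⟩ := h₂ (n + k)
      refine ⟨z - x * p ^ k + x' * p ^ k, ?_⟩
      have : α (n + k) - α' (n + k)
          = (p : ℝ) * (α (n + k + 1) - α' (n + k + 1)) - x + x' := by
        rw [mul_sub, hx, hx']; ring
      rw [hz, this]
      push_cast
      ring_nf
  obtain ⟨m, hm, hmn⟩ := hinf.exists_gt n
  obtain ⟨z, hz⟩ := key (m - n)
  refine ⟨z, ?_⟩
  have hnm : n + (m - n) = m := by omega
  rw [hz, hnm, hm]
  simp
end
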